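/- arXiv:1802.05969 — 2 statements merged into one kernel-verified Lean document; each statement's English description precedes it below -/
import Mathlib

section
/- The slot-replicating network semantics simulates the simple network semantics slot-wise: for any index set I and any slot i ∈ I, the projection of every slot-replicated behaviour onto slot i (restricting each node's state to its i-th component and the message soup to messages with slot field i) is a behaviour of the simple protocol semantics. -/
namespace PaxosNet

/-- Messages of a protocol: a source node, a destination node, an `active`
flag (set on sending, cleared on receipt) and a content. -/
structure Msg (C : Type*) where
  src : ℕ
  dst : ℕ
  active : Bool
  content : C

/-- An abstract distributed protocol `⟨Δ, M, S_int, S_rcv, S_snd⟩` with a set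
of initial local states, an internal step relation, a receive relation and a
send relation. -/
structure Protocol (Δ C : Type*) where
  init : Set Δ
  sint : Δ → Δ → Prop
  srcv : Δ → Msg C → Δ → Prop
  ssnd : Δ → Δ → Set (Msg C) → Prop

variable {Δ C I : Type*}

def deact (m : Msg C) : Msg C := { m with active := false }

/-- A configuration: a global state assigning local states to nodes, together
with a "message soup". -/
abbrev Conf (Δ C : Type*) := (ℕ → Δ) × Set (Msg C)

/-- The simple protocol-aware network semantics: internal steps, send steps
(adding the emitted messages to the soup) and receive steps (consuming an
active message, deactivating it, and updating the destination node). -/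
inductive SimpleStep (p : Protocol Δ C) : Conf Δ C → Conf Δ C → Prop
  | int (σ : ℕ → Δ) (M : Set (Msg C)) (n : ℕ) (δ' : Δ) :
      p.sint (σ n) δ' →
      SimpleStep p (σ, M) (Function.update σ n δ', M)
  | send (σ : ℕ → Δ) (M : Set (Msg C)) (n : ℕ) (δ' : Δ) (ms : Set (Msg C)) :
      p.ssnd (σ n) δ' ms →
      SimpleStep p (σ, M) (Function.update σ n δ', M ∪ ms)
  | recv (σ : ℕ → Δ) (M : Set (Msg C)) (m : Msg C) (δ' : Δ) :
      m ∈ M → m.active = true →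
      p.srcv (σ m.dst) m δ' →
      SimpleStep p (σ, M) (Function.update σ m.dst δ', (M \ {m}) ∪ {deact m})

/-- Behaviours of a step relation: the prefix-closed set of finite
configuration traces that start in an initial configuration and are closed
under steps. -/
def Beh {α : Type*} (step : α → α → Prop) (initC : α → Prop) : Set (List α) :=
  { t | List.Chain' step t ∧ ∀ c ∈ t.head?, initC c }

def SimpleInit (p : Protocol Δ C) : Conf Δ C → Prop :=
  fun c => ∀ n, c.1 n ∈ p.init

/-! ### Slot-replicating semantics -/

/-- Slotted messages: messages enhanced with a `slot` field from `I`. -/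
abbrev SMsg (C I : Type*) := Msg (I × C)

/-- Slot-replicated configurations: each node holds an `I`-indexed array of
local states. -/
abbrev SConf (Δ C I : Type*) := (ℕ → I → Δ) × Set (SMsg C I)

def slotOf (m : SMsg C I) : I := m.content.1

/-- Erase the slot field of a slotted message. -/
def core (m : SMsg C I) : Msg C := ⟨m.src, m.dst, m.active, m.content.2⟩

/-- Tag a message with a slot. -/
def withSlot (i : I) (m : Msg C) : SMsg C I := ⟨m.src, m.dst, m.active, (i, m.content)⟩

variable [DecidableEq I]

def updSlot (σ : ℕ → I → Δ) (n : ℕ) (i : I) (δ' : Δ) : ℕ → I → Δ :=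
  Function.update σ n (Function.update (σ n) i δ')

/-- The slot-replicating network semantics: each rule acts on the component of
a single slot, and messages are dispatched according to their slot field. -/
inductive SRStep (p : Protocol Δ C) : SConf Δ C I → SConf Δ C I → Prop
  | int (σ : ℕ → I → Δ) (M : Set (SMsg C I)) (n : ℕ) (i : I) (δ' : Δ) :
      p.sint (σ n i) δ' →
      SRStep p (σ, M) (updSlot σ n i δ', M)
  | send (σ : ℕ → I → Δ) (M : Set (SMsg C I)) (n : ℕ) (i : I) (δ' : Δ)
      (ms : Set (Msg C)) :
      p.ssnd (σ n i) δ' ms →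
      SRStep p (σ, M) (updSlot σ n i δ', M ∪ (withSlot i '' ms))
  | recv (σ : ℕ → I → Δ) (M : Set (SMsg C I)) (m : SMsg C I) (δ' : Δ) :
      m ∈ M → m.active = true →
      p.srcv (σ m.dst (slotOf m)) (core m) δ' →
      SRStep p (σ, M)
        (updSlot σ m.dst (slotOf m) δ', (M \ {m}) ∪ {deact m})

def SRInit (p : Protocol Δ C) : SConf Δ C I → Prop :=
  fun c => ∀ (n : ℕ) (i : I), c.1 n i ∈ p.init

/-- Projection of a slot-replicated configuration onto slot `i`: restrict each
node's state to the `i`-th component and the soup to the messages with slot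
field `i` (with their slot field erased). -/
def projConf (i : I) (c : SConf Δ C I) : Conf Δ C :=
  (fun n => c.1 n i, core '' { m ∈ c.2 | slotOf m = i })

end PaxosNet

/-! Each step of the slot-replicating semantics acts on a single slot `j`. Projected onto slot `i`
it is the corresponding simple step when `j = i`, and leaves the projection unchanged otherwise;
such a stutter is an internal step because `S_int` contains the identity. On the message soup
the projection onto slot `i` is the preimage under `withSlot i`, which turns every soup update
into plain set algebra. -/

namespace PaxosNet

variable {Δ C I : Type*}

theorem Beh.map_mem {α β : Type*} {step : α → α → Prop} {initC : α → Prop}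
    {step' : β → β → Prop} {initC' : β → Prop} (f : α → β)
    (hstep : ∀ a b, step a b → step' (f a) (f b)) (hinit : ∀ a, initC a → initC' (f a))
    {t : List α} (ht : t ∈ Beh step initC) : t.map f ∈ Beh step' initC' := by
  obtain ⟨hchain, hhead⟩ := ht
  refine ⟨List.isChain_map f |>.2 (hchain.imp hstep), ?_⟩
  simp only [List.head?_map, Option.mem_map, forall_exists_index, and_imp]
  rintro _ c hc rfl
  exact hinit c (hhead c hc)

theorem SimpleStep.refl {p : Protocol Δ C} (hid : ∀ δ, p.sint δ δ) (c : Conf Δ C) :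
    SimpleStep p c c := by
  obtain ⟨σ, M⟩ := c
  simpa using SimpleStep.int σ M 0 (σ 0) (hid _)

theorem withSlot_eq_iff {i : I} {x : Msg C} {m : SMsg C I} :
    withSlot i x = m ↔ slotOf m = i ∧ core m = x := by
  obtain ⟨src, dst, act, j, c⟩ := m
  cases x
  simp only [withSlot, slotOf, core, Msg.mk.injEq, Prod.mk.injEq]
  tauto

theorem withSlot_core {i : I} {m : SMsg C I} (hm : slotOf m = i) : withSlot i (core m) = m :=
  withSlot_eq_iff.2 ⟨hm, rfl⟩

theorem withSlot_injective (i : I) : Function.Injective (withSlot (C := C) i) :=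
  fun _ _ h => (withSlot_eq_iff.1 h).2.symm

theorem preimage_withSlot_image_of_ne {i j : I} (hji : j ≠ i) (ms : Set (Msg C)) :
    withSlot i ⁻¹' (withSlot j '' ms) = ∅ :=
  Set.eq_empty_iff_forall_notMem.2 fun _ ⟨_, _, h⟩ => hji (withSlot_eq_iff.1 h).1.symm

theorem preimage_withSlot_singleton {i : I} {m : SMsg C I} (hm : slotOf m = i) :
    withSlot i ⁻¹' {m} = {core m} :=
  Set.ext fun _ => withSlot_eq_iff.trans ⟨fun h => h.2.symm, fun h => ⟨hm, h.symm⟩⟩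

theorem preimage_withSlot_singleton_of_ne {i : I} {m : SMsg C I} (hm : slotOf m ≠ i) :
    withSlot i ⁻¹' {m} = ∅ :=
  Set.eq_empty_iff_forall_notMem.2 fun _ h => hm (withSlot_eq_iff.1 h).1

theorem projConf_eq_preimage (i : I) (c : SConf Δ C I) :
    projConf i c = (fun n => c.1 n i, withSlot i ⁻¹' c.2) := by
  refine Prod.ext rfl (Set.ext fun x => ⟨?_, fun hx => ⟨withSlot i x, ⟨hx, rfl⟩, rfl⟩⟩)
  rintro ⟨m, ⟨hm, hslot⟩, rfl⟩
  rwa [Set.mem_preimage, withSlot_core hslot]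

variable [DecidableEq I]

theorem updSlot_apply_self (σ : ℕ → I → Δ) (n : ℕ) (i : I) (δ' : Δ) :
    (fun k => updSlot σ n i δ' k i) = Function.update (fun k => σ k i) n δ' := by
  funext k
  rcases eq_or_ne k n with rfl | hk <;> simp [updSlot, *]

theorem updSlot_apply_of_ne {i j : I} (hji : j ≠ i) (σ : ℕ → I → Δ) (n : ℕ) (δ' : Δ) :
    (fun k => updSlot σ n j δ' k i) = fun k => σ k i := by
  funext k
  rcases eq_or_ne k n with rfl | hk <;> simp [updSlot, hji.symm, *]

theorem SRStep.projConf_eq_or_simpleStep {p : Protocol Δ C} (i : I) {c c' : SConf Δ C I}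
    (h : SRStep p c c') :
    projConf i c' = projConf i c ∨ SimpleStep p (projConf i c) (projConf i c') := by
  simp only [projConf_eq_preimage]
  cases h with
  | int σ M n j δ' hs =>
    rcases eq_or_ne j i with rfl | hji
    · exact .inr (updSlot_apply_self σ n j δ' ▸ .int _ _ n δ' hs)
    · exact .inl (by rw [updSlot_apply_of_ne hji])
  | send σ M n j δ' ms hs =>
    rcases eq_or_ne j i with rfl | hji
    · right
      rw [updSlot_apply_self, Set.preimage_union,
        Set.preimage_image_eq ms (withSlot_injective j)]
      exact .send _ _ n δ' ms hs
    · left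
      rw [updSlot_apply_of_ne hji, Set.preimage_union, preimage_withSlot_image_of_ne hji,
        Set.union_empty]
  | recv σ M m δ' hm hact hs =>
    rcases eq_or_ne (slotOf m) i with rfl | hji
    · right
      rw [updSlot_apply_self, Set.preimage_union, Set.preimage_sdiff,
        preimage_withSlot_singleton rfl,
        preimage_withSlot_singleton (i := slotOf m) (m := deact m) rfl]
      exact .recv _ _ (core m) δ' (by rwa [Set.mem_preimage, withSlot_core rfl]) hact hs
    · left
      rw [updSlot_apply_of_ne hji, Set.preimage_union, Set.preimage_sdiff,
        preimage_withSlot_singleton_of_ne hji,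
        preimage_withSlot_singleton_of_ne (m := deact m) hji,
        Set.sdiff_empty, Set.union_empty]

/-- **Slot-replicating simulation** (one direction): for any index set `I` and
slot `i ∈ I`, the slot-`i` projection of every behaviour of the
slot-replicating semantics is a behaviour of the simple protocol semantics
(the protocol's internal step relation contains the identity). -/
theorem slot_projection_is_simple_behaviour
    (p : Protocol Δ C) (hid : ∀ δ, p.sint δ δ) (i : I) :
    ∀ t ∈ Beh (SRStep (I := I) p) (SRInit p),
      t.map (projConf i) ∈ Beh (SimpleStep p) (SimpleInit p) := fun _ =>
  Beh.map_mem (projConf i)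
    (fun _ _ h => (h.projConf_eq_or_simpleStep i).elim (· ▸ .refl hid _) id)
    (fun _ hc n => hc n i)

end PaxosNet
end

section
/- In a system of n acceptors each running the Round-Based Register acceptor transition, if a write with round k and value v was acknowledged by a quorum Q1 (|Q1| ≥ ⌈(n+1)/2⌉), and afterwards a read with round k' > k collects read-acknowledgements from a quorum Q2, then some acceptor in Q2 reports an accepted value with write round ≥ k; in particular the maximum reported write round among Q2's acknowledgements is at least k. -/
/-! A write acknowledged by `j` leaves `w_j = r_j`, and from any state with `w ≤ r` the write
round of an acceptor can only grow, since a later write needs a round `≥ r ≥ w`. Two majorities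
of the acceptors share a member, which therefore reports a write round `≥ k` to the read. -/

/-- Local state of a Round-Based Register acceptor. -/
structure AccSt (V : Type*) where
  v : Option V
  r : ℕ
  w : ℕ

/-- Acceptor transitions of the Round-Based Register. -/
inductive AStep {V : Type*} : AccSt V → AccSt V → Prop
  | readNack (s : AccSt V) (k : ℕ) : k < s.r → AStep s s
  | readAck (s : AccSt V) (k : ℕ) : s.r ≤ k → AStep s ⟨s.v, k, s.w⟩
  | writeNack (s : AccSt V) (k : ℕ) (vW : V) : k < s.r → AStep s s
  | writeAck (s : AccSt V) (k : ℕ) (vW : V) : s.r ≤ k → AStep s ⟨some vW, k, k⟩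

namespace AStep

variable {V : Type*} {s s' : AccSt V}

theorem w_le_r (h : AStep s s') (hs : s.w ≤ s.r) : s'.w ≤ s'.r := by
  cases h with
  | readNack _ _ => exact hs
  | readAck _ hk => exact hs.trans hk
  | writeNack _ _ _ => exact hs
  | writeAck _ _ _ => exact le_rfl

theorem w_le_w (h : AStep s s') (hs : s.w ≤ s.r) : s.w ≤ s'.w := by
  cases h with
  | readNack _ _ => exact le_rfl
  | readAck _ _ => exact le_rfl
  | writeNack _ _ _ => exact le_rfl
  | writeAck _ _ hk => exact hs.trans hk

end AStep

def IsAcceptorRun {V : Type*} (σ : ℕ → AccSt V) : Prop :=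
  ∀ t, σ t = σ (t + 1) ∨ AStep (σ t) (σ (t + 1))

namespace IsAcceptorRun

variable {V : Type*} {σ : ℕ → AccSt V} {t₀ : ℕ}

theorem w_le_r_of_le (hσ : IsAcceptorRun σ) (h₀ : (σ t₀).w ≤ (σ t₀).r) {t : ℕ} (ht : t₀ ≤ t) :
    (σ t).w ≤ (σ t).r := by
  induction t, ht using Nat.le_induction with
  | base => exact h₀
  | succ t _ ih =>
    rcases hσ t with h | h
    · rwa [← h]
    · exact h.w_le_r ih

theorem monotoneOn_w (hσ : IsAcceptorRun σ) (h₀ : (σ t₀).w ≤ (σ t₀).r) :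
    MonotoneOn (fun t ↦ (σ t).w) (Set.Ici t₀) :=
  monotoneOn_nat_Ici_of_le_succ fun t ht ↦ by
    rcases hσ t with h | h
    · rw [← h]
    · exact h.w_le_w (hσ.w_le_r_of_le h₀ ht)

end IsAcceptorRun

theorem quorum_read_sees_quorum_write_general {ι V : Type*}
    (A Q1 Q2 : Finset ι) (n : ℕ)
    (states : ι → ℕ → AccSt V)
    (hstep : ∀ j t, states j t = states j (t + 1) ∨
      AStep (states j t) (states j (t + 1)))
    (hA : A.card = n) (hQ1A : Q1 ⊆ A) (hQ2A : Q2 ⊆ A)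
    (hc1 : (n + 1 + 1) / 2 ≤ Q1.card) (hc2 : (n + 1 + 1) / 2 ≤ Q2.card)
    (k k' : ℕ) (v : V) (t0 : ℕ)
    (readT : ι → ℕ)
    -- every acceptor in Q1 executed a write-acknowledgement for (k, v)
    -- strictly before t0
    (hwr : ∀ j ∈ Q1, ∃ t, t + 1 ≤ t0 ∧ (states j t).r ≤ k ∧
      states j (t + 1) = (⟨some v, k, k⟩ : AccSt V))
    -- every acceptor in Q2 executed a read-acknowledgement at round k' at
    -- time readT j ≥ t0, reporting its current pair (v, w)
    (hrd : ∀ j ∈ Q2, t0 ≤ readT j ∧ (states j (readT j)).r ≤ k' ∧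
      states j (readT j + 1) =
        (⟨(states j (readT j)).v, k', (states j (readT j)).w⟩ : AccSt V)) :
    ∃ j ∈ Q2, k ≤ (states j (readT j)).w := by
  classical
  obtain ⟨j, hj⟩ := Finset.inter_nonempty_of_card_lt_card_add_card hQ1A hQ2A (by omega)
  obtain ⟨hj1, hj2⟩ := Finset.mem_inter.1 hj
  obtain ⟨t, hwrite_before, -, hwrite⟩ := hwr j hj1
  have hwritten : (states j (t + 1)).w ≤ (states j (t + 1)).r := by rw [hwrite]
  have hmono := IsAcceptorRun.monotoneOn_w (hstep j) hwritten
  have hread_after : t + 1 ≤ readT j := hwrite_before.trans (hrd j hj2).1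
  refine ⟨j, hj2, ?_⟩
  calc k = (states j (t + 1)).w := by rw [hwrite]
    _ ≤ (states j (readT j)).w := hmono Set.self_mem_Ici hread_after hread_after

/-- In a system of `n` acceptors (a finite set `A` of identifiers, each running
the acceptor transition system, with global executions modelled as
interleavings: at each time step every acceptor either stutters or takes an
`AStep`), if a write with round `k` and value `v` was acknowledged before time
`t0` by every member of a quorum `Q1` (`|Q1| ≥ ⌈(n+1)/2⌉`), and afterwards a
read with round `k' > k` collects read-acknowledgements (at times `readT j ≥
t0`) from every member of a quorum `Q2`, then some acceptor in `Q2` reports an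
accepted value with write round at least `k`; in particular the maximum
reported write round among `Q2`'s acknowledgements is at least `k`. -/
theorem quorum_read_sees_quorum_write {ι V : Type*}
    (A Q1 Q2 : Finset ι) (n : ℕ)
    (states : ι → ℕ → AccSt V)
    (hinit : ∀ j, states j 0 = (⟨none, 0, 0⟩ : AccSt V))
    (hstep : ∀ j t, states j t = states j (t + 1) ∨
      AStep (states j t) (states j (t + 1)))
    (hA : A.card = n) (hQ1A : Q1 ⊆ A) (hQ2A : Q2 ⊆ A)
    (hc1 : (n + 1 + 1) / 2 ≤ Q1.card) (hc2 : (n + 1 + 1) / 2 ≤ Q2.card)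
    (k k' : ℕ) (v : V) (t0 : ℕ) (hkk' : k < k')
    (readT : ι → ℕ)
    -- every acceptor in Q1 executed a write-acknowledgement for (k, v)
    -- strictly before t0
    (hwr : ∀ j ∈ Q1, ∃ t, t + 1 ≤ t0 ∧ (states j t).r ≤ k ∧
      states j (t + 1) = (⟨some v, k, k⟩ : AccSt V))
    -- every acceptor in Q2 executed a read-acknowledgement at round k' at
    -- time readT j ≥ t0, reporting its current pair (v, w)
    (hrd : ∀ j ∈ Q2, t0 ≤ readT j ∧ (states j (readT j)).r ≤ k' ∧
      states j (readT j + 1) =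
        (⟨(states j (readT j)).v, k', (states j (readT j)).w⟩ : AccSt V)) :
    ∃ j ∈ Q2, k ≤ (states j (readT j)).w :=
  quorum_read_sees_quorum_write_general A Q1 Q2 n states hstep hA hQ1A hQ2A hc1 hc2 k k' v t0 readT
    hwr hrd
end
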